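/- Let x, y ∈ ℝ³ be unit vectors with r := arccos⟨x,y⟩ satisfying 0 < r < π, and set e₁^x = (sin r)⁻¹ • (y − cos r • x) and e₁^y = (sin r)⁻¹ • (cos r • y − x). Let γx, γy : ℝ → ℝ³ be curves taking values in the unit sphere (‖γx(t)‖ = ‖γy(t)‖ = 1 for all t), differentiable at 0, with γx(0) = x, γy(0) = y, γx'(0) = u and γy'(0) = v. Then the function t ↦ arccos⟨γx(t), γy(t)⟩ is differentiable at 0 with derivative ⟨v, e₁^y⟩ − ⟨u, e₁^x⟩. -/

import Mathlib

/-!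
Differentiating `‖γ t‖² = 1` shows that the velocities are tangent: `⟪x, u⟫ = ⟪y, v⟫ = 0`.
By the chain rule, the derivative of `arccos ⟪γx t, γy t⟫` at `0` is
`-(⟪x, v⟫ + ⟪u, y⟫) / sin r`, since `sin (arccos c) = √(1 - c²)`. Expanding
`⟪v, e₁^y⟫ - ⟪u, e₁^x⟫` with the two tangency relations gives the same number.
-/

open Real RealInnerProductSpace

theorem HasDerivAt.arccos {f : ℝ → ℝ} {f' x : ℝ} (hf : HasDerivAt f f' x)
    (h₁ : f x ≠ -1) (h₂ : f x ≠ 1) :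
    HasDerivAt (fun t => arccos (f t)) (-f' / √(1 - f x ^ 2)) x := by
  exact ((hasDerivAt_arccos h₁ h₂).comp x hf).congr_deriv (by ring)

theorem HasDerivAt.inner_eq_zero_of_forall_norm_eq
    {E : Type*} [NormedAddCommGroup E] [InnerProductSpace ℝ E]
    {γ : ℝ → E} {u : E} {t₀ c : ℝ} (hγ : ∀ t, ‖γ t‖ = c) (h : HasDerivAt γ u t₀) :
    ⟪γ t₀, u⟫ = 0 := by
  have hconst : HasDerivAt (‖γ ·‖ ^ 2) 0 t₀ := by
    simpa only [hγ] using hasDerivAt_const t₀ (c ^ 2)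
  simpa using h.norm_sq.unique hconst

theorem spherical_distance_first_variation
    (x y u v : EuclideanSpace ℝ (Fin 3))
    (r : ℝ) (hr : r = Real.arccos (inner ℝ x y))
    (hr0 : 0 < r) (hrπ : r < Real.pi)
    (e1x e1y : EuclideanSpace ℝ (Fin 3))
    (he1x : e1x = (Real.sin r)⁻¹ • (y - Real.cos r • x))
    (he1y : e1y = (Real.sin r)⁻¹ • (Real.cos r • y - x))
    (γx γy : ℝ → EuclideanSpace ℝ (Fin 3))
    (hγx1 : ∀ t, ‖γx t‖ = 1) (hγy1 : ∀ t, ‖γy t‖ = 1)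
    (hγx0 : γx 0 = x) (hγy0 : γy 0 = y)
    (hu : HasDerivAt γx u 0) (hv : HasDerivAt γy v 0) :
    HasDerivAt (fun t => Real.arccos (inner ℝ (γx t) (γy t)))
      ((inner ℝ v e1y : ℝ) - (inner ℝ u e1x : ℝ)) 0 := by
  subst hr he1x he1y
  have hxu : ⟪x, u⟫ = 0 := hγx0 ▸ hu.inner_eq_zero_of_forall_norm_eq hγx1
  have hyv : ⟪y, v⟫ = 0 := hγy0 ▸ hv.inner_eq_zero_of_forall_norm_eq hγy1
  have h₁ : ⟪x, y⟫ ≠ -1 := (arccos_lt_pi.1 hrπ).ne'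
  have h₂ : ⟪x, y⟫ ≠ 1 := (arccos_pos.1 hr0).ne
  have hderiv := (hu.inner ℝ hv).arccos (by rwa [hγx0, hγy0]) (by rwa [hγx0, hγy0])
  convert hderiv using 1
  simp only [hγx0, hγy0, sin_arccos, inner_smul_right, inner_sub_right,
    real_inner_comm y v, real_inner_comm x u, real_inner_comm v x, hxu, hyv]
  ring
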